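/- Inverse explicit expression: for every nonnegative integer k and real x, x^k = (k!/2^k)·∑_{m=0}^{⌊k/2⌋} 1/(m!·(k−2m)!)·H_{k−2m}(x). -/

import Mathlib

open Real MeasureTheory

/-- The physicists' Hermite polynomials: `H 0 = 1`, `H (k+1) = 2·X·H k − (H k)'`. -/
noncomputable def hermiteP : ℕ → Polynomial ℝ
  | 0 => 1
  | n + 1 => 2 * (Polynomial.X * hermiteP n) - Polynomial.derivative (hermiteP n)

/-- The k-th physicists' Hermite polynomial as a function on ℝ. -/
noncomputable def H (k : ℕ) (x : ℝ) : ℝ := (hermiteP k).eval x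

/-- The normalization constants `α k = (2^k · k! · √π)^{-1/2}`. -/
noncomputable def α (k : ℕ) : ℝ :=
  ((2 : ℝ) ^ k * (Nat.factorial k : ℝ) * Real.sqrt π) ^ (-(1 / 2 : ℝ))

/-- The normalized Hermite functions `h k x = α k · H k x · e^{-x²/2}`. -/
noncomputable def h (k : ℕ) (x : ℝ) : ℝ := α k * H k x * Real.exp (-x ^ 2 / 2)

/-!
Multiplying the expansion of `(2x)^k` by `2x` and using the three-term recurrence
`2x H_j = H_{j+1} + 2j H_{j-1}` gives the expansion of `(2x)^(k+1)`, because the coefficients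
`k!/(m!(k-2m)!) = k.descFactorial (2m) / m!` obey the Pascal-type rule
`(k+1).descFactorial (i+1) = k.descFactorial (i+1) + (i+1) k.descFactorial i`.
In the `descFactorial` form the terms with `2m > k` vanish, so the sum may run over any long
enough range.
-/

open Polynomial Finset
open scoped Nat

theorem Nat.succ_descFactorial_succ_eq_add (n k : ℕ) :
    (n + 1).descFactorial (k + 1) = n.descFactorial (k + 1) + (k + 1) * n.descFactorial k := by
  rw [Nat.succ_descFactorial_succ, Nat.descFactorial_succ]
  rcases le_or_gt k n with hkn | hnk
  · rw [← add_mul]; congr 1; omega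
  · simp [Nat.descFactorial_eq_zero_iff_lt.mpr hnk]

theorem derivative_hermiteP_succ (n : ℕ) :
    derivative (hermiteP (n + 1)) = 2 * ((n : ℝ[X]) + 1) * hermiteP n := by
  induction n with
  | zero => simp [hermiteP]
  | succ n ih =>
    rw [hermiteP]
    simp only [derivative_sub, derivative_mul, derivative_X, derivative_ofNat, derivative_add,
      derivative_natCast, derivative_one, ih]
    rw [hermiteP]
    push_cast
    ring

theorem two_mul_mul_H (n : ℕ) (x : ℝ) : 2 * x * H n x = H (n + 1) x + 2 * n * H (n - 1) x := by
  cases n with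
  | zero => simp [H, hermiteP]
  | succ n =>
    simp only [H, hermiteP.eq_2 (n + 1), derivative_hermiteP_succ, eval_sub, eval_mul, eval_X,
      eval_ofNat, eval_add, eval_natCast, eval_one, add_tsub_cancel_right, Nat.cast_add,
      Nat.cast_one]
    ring

theorem two_mul_mul_descFactorial_mul_H (k m : ℕ) (x : ℝ) :
    2 * x * ((k.descFactorial (2 * m) : ℝ) / m ! * H (k - 2 * m) x) =
      (k.descFactorial (2 * m) : ℝ) / m ! * H (k + 1 - 2 * m) x +
        2 * (k.descFactorial (2 * m + 1) : ℝ) / m ! * H (k + 1 - 2 * (m + 1)) x := by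
  rcases le_or_gt (2 * m) k with hmk | hkm
  · rw [show k + 1 - 2 * m = k - 2 * m + 1 by omega,
      show k + 1 - 2 * (m + 1) = k - 2 * m - 1 by omega, Nat.descFactorial_succ, Nat.cast_mul,
      mul_left_comm, two_mul_mul_H]
    ring
  · simp [Nat.descFactorial_eq_zero_iff_lt.mpr hkm]

theorem two_mul_pow_eq_sum_descFactorial_mul_H (x : ℝ) {k n : ℕ} (hn : k < 2 * n) :
    (2 * x) ^ k = ∑ m ∈ range n, (k.descFactorial (2 * m) : ℝ) / m ! * H (k - 2 * m) x := by
  induction k generalizing n with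
  | zero =>
    obtain ⟨n, rfl⟩ := Nat.exists_eq_add_one.mpr (by omega : 0 < n)
    simp [sum_range_succ', H, hermiteP, Nat.mul_succ]
  | succ k ih =>
    obtain ⟨n, rfl⟩ := Nat.exists_eq_add_one.mpr (by omega : 0 < n)
    have hlast : (k.descFactorial (2 * n + 1) : ℝ) = 0 := by
      exact_mod_cast Nat.descFactorial_eq_zero_iff_lt.mpr (by omega)
    calc (2 * x) ^ (k + 1)
      _ = ∑ m ∈ range (n + 1),
            2 * x * ((k.descFactorial (2 * m) : ℝ) / m ! * H (k - 2 * m) x) := by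
          rw [pow_succ', ih (by omega : k < 2 * (n + 1)), mul_sum]
      _ = ∑ m ∈ range (n + 1), (k.descFactorial (2 * m) : ℝ) / m ! * H (k + 1 - 2 * m) x +
            ∑ m ∈ range n,
              2 * (k.descFactorial (2 * m + 1) : ℝ) / m ! * H (k + 1 - 2 * (m + 1)) x := by
          rw [sum_congr rfl fun m _ => two_mul_mul_descFactorial_mul_H k m x, sum_add_distrib]
          congr 1
          rw [sum_range_succ, hlast]
          simp
      _ = ∑ m ∈ range (n + 1),
            ((k + 1).descFactorial (2 * m) : ℝ) / m ! * H (k + 1 - 2 * m) x := by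
          rw [sum_range_succ', sum_range_succ' _ n, add_right_comm, ← sum_add_distrib]
          congr 1
          refine sum_congr rfl fun m _ => ?_
          rw [show 2 * (m + 1) = 2 * m + 1 + 1 by ring, Nat.succ_descFactorial_succ_eq_add,
            Nat.factorial_succ]
          push_cast
          field_simp
          ring

theorem stmt_7 (k : ℕ) (x : ℝ) :
    x ^ k =
      (Nat.factorial k : ℝ) / 2 ^ k *
        ∑ m ∈ Finset.range (k / 2 + 1),
          1 / ((Nat.factorial m : ℝ) * (Nat.factorial (k - 2 * m) : ℝ)) *
            H (k - 2 * m) x := by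
  have hx : x ^ k = (2 * x) ^ k / 2 ^ k := by rw [mul_pow]; field_simp
  rw [hx, two_mul_pow_eq_sum_descFactorial_mul_H x (by omega : k < 2 * (k / 2 + 1)), mul_sum,
    sum_div]
  refine sum_congr rfl fun m hm => ?_
  rw [← Nat.factorial_mul_descFactorial (by rw [mem_range] at hm; omega : 2 * m ≤ k)]
  push_cast
  field_simp
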